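/- (Converging disturbance implies convergence) Let σ ∈ (0,1) and δ₀ > 0 be such that for every symmetric P with ‖P − P*‖_F < δ₀, 𝒜(P) is Hurwitz and the unique symmetric solution P' of 𝒜(P)ᵀP' + P'𝒜(P) = −(Q + P B R⁻¹ Bᵀ P) satisfies ‖P' − P*‖_F ≤ σ‖P − P*‖_F. Then there exists δ₁ > 0 such that: for every robust policy-iteration data (ΔG_i, P̃_i, K̂_i)_{i≥1} together with a symmetric P̃₀ satisfying ‖P̃₀ − P*‖_F < δ₀ and K̂₁ = R⁻¹BᵀP̃₀, if sup_{i≥1} ‖ΔG_i‖_F < δ₁ and lim_{i→∞} ‖ΔG_i‖_F = 0, then lim_{i→∞} ‖P̃_i − P*‖_F = 0. -/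

import Mathlib

open Matrix MeasureTheory Filter NormedSpace
open scoped Kronecker

noncomputable section

/-- A real square matrix is Hurwitz if every eigenvalue over `ℂ` has negative real part. -/
def IsHurwitz {n : Type*} [Fintype n] [DecidableEq n] (X : Matrix n n ℝ) : Prop :=
  ∀ μ ∈ spectrum ℂ (X.map (algebraMap ℝ ℂ)), μ.re < 0

/-- The Frobenius norm of a real matrix. -/
def frobNorm {p q : Type*} [Fintype p] [Fintype q] (X : Matrix p q ℝ) : ℝ :=
  Real.sqrt (∑ i, ∑ j, (X i j) ^ 2)

/-- The spectral (ℓ²-operator) norm of a real matrix. -/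
def spec2Norm {p q : Type*} [Fintype p] [Fintype q] [DecidableEq q] (X : Matrix p q ℝ) : ℝ :=
  ‖LinearMap.toContinuousLinearMap (Matrix.toEuclideanLin X)‖

attribute [local instance] Matrix.normedAddCommGroup Matrix.normedSpace

/-- Robust policy-iteration data: for every `i ≥ 1`, the disturbance `ΔG i` and the
matrix `P̃ i` are symmetric, `P̃ i` solves the policy-evaluation Lyapunov equation for
the gain `K̂ i`, and the next gain `K̂ (i+1)` solves the disturbed policy-update
equation `(R + ΔG_{i,22}) K̂_{i+1} = Bᵀ P̃_i + ΔG_{i,21}`. -/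
def IsRPIData (n m : ℕ)
    (A : Matrix (Fin n) (Fin n) ℝ) (B : Matrix (Fin n) (Fin m) ℝ)
    (Q : Matrix (Fin n) (Fin n) ℝ) (R : Matrix (Fin m) (Fin m) ℝ)
    (ΔG : ℕ → Matrix (Fin n ⊕ Fin m) (Fin n ⊕ Fin m) ℝ)
    (Pt : ℕ → Matrix (Fin n) (Fin n) ℝ)
    (Kh : ℕ → Matrix (Fin m) (Fin n) ℝ) : Prop :=
  ∀ i, 1 ≤ i →
    (ΔG i).IsSymm ∧ (Pt i).IsSymm ∧
    (A - B * Kh i)ᵀ * Pt i + Pt i * (A - B * Kh i) + Q + (Kh i)ᵀ * R * (Kh i) = 0 ∧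
    (R + (ΔG i).toBlocks₂₂) * Kh (i + 1) = Bᵀ * Pt i + (ΔG i).toBlocks₂₁

/-!
The exact policy-iteration step is a `σ`-contraction towards `P*` on the `δ₀`-ball. A disturbance
`ΔG` moves the updated gain by `O(‖ΔG‖)`; since the closed-loop matrices `𝒜(P)` of a compact ball
inside the `δ₀`-ball are Hurwitz, the Lyapunov operators `X ↦ 𝒜(P)ᵀX + X𝒜(P)` have uniformly bounded
inverses, so the evaluated value also moves by `O(‖ΔG‖)`. Hence `eᵢ = ‖P̃ᵢ - P*‖` satisfies
`eᵢ₊₁ ≤ σ eᵢ + c ‖ΔGᵢ‖` as long as `P̃ᵢ` stays in that ball, which small disturbances guarantee, and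
such a recursion forces `eᵢ → 0` when `ΔGᵢ → 0`.
-/

-- Declared after the sup-norm instances above, so that `‖·‖` below is the Frobenius norm.
attribute [local instance] Matrix.frobeniusNormedAddCommGroup Matrix.frobeniusNormedSpace

open Topology

section Frobenius

variable {p q : Type*} [Fintype p] [Fintype q]

theorem frobNorm_eq_norm (X : Matrix p q ℝ) : frobNorm X = ‖X‖ := by
  simp [frobNorm, Matrix.frobenius_norm_def, Real.sqrt_eq_rpow]

theorem Fintype.sum_comp_le_sum_of_injective {ι κ M : Type*} [Fintype ι] [Fintype κ]
    [AddCommMonoid M] [PartialOrder M] [IsOrderedAddMonoid M] (g : κ → M) {e : ι → κ}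
    (he : Function.Injective e) (hg : ∀ b, 0 ≤ g b) : ∑ a, g (e a) ≤ ∑ b, g b :=
  calc ∑ a, g (e a) = ∑ b ∈ Finset.univ.map ⟨e, he⟩, g b := by rw [Finset.sum_map]; rfl
    _ ≤ ∑ b, g b := Finset.sum_le_sum_of_subset_of_nonneg (Finset.subset_univ _) fun b _ _ => hg b

theorem Matrix.frobenius_norm_submatrix_le {k l : Type*} [Fintype k] [Fintype l]
    (X : Matrix p q ℝ) {e : k → p} {f : l → q} (he : Function.Injective e)
    (hf : Function.Injective f) : ‖X.submatrix e f‖ ≤ ‖X‖ := by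
  rw [frobenius_norm_def, frobenius_norm_def]
  gcongr
  calc ∑ i, ∑ j, ‖X.submatrix e f i j‖ ^ (2 : ℝ) ≤ ∑ i, ∑ j, ‖X (e i) j‖ ^ (2 : ℝ) :=
        Finset.sum_le_sum fun i _ =>
          Fintype.sum_comp_le_sum_of_injective (fun j => ‖X (e i) j‖ ^ (2 : ℝ)) hf
            fun _ => by positivity
    _ ≤ ∑ i, ∑ j, ‖X i j‖ ^ (2 : ℝ) :=
        Fintype.sum_comp_le_sum_of_injective (fun i => ∑ j, ‖X i j‖ ^ (2 : ℝ)) he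
          fun _ => Finset.sum_nonneg fun _ _ => by positivity

theorem Matrix.frobenius_norm_mul_mul_le {k l : Type*} [Fintype k] [Fintype l]
    (X : Matrix p q ℝ) (Y : Matrix q k ℝ) (Z : Matrix k l ℝ) : ‖X * Y * Z‖ ≤ ‖X‖ * ‖Y‖ * ‖Z‖ :=
  (frobenius_norm_mul _ _).trans (by gcongr; exact frobenius_norm_mul _ _)

end Frobenius

section Lyapunov

open Polynomial in
theorem Matrix.eq_zero_of_mul_eq_mul_of_disjoint_spectrum {K m n : Type*} [Field K]
    [IsAlgClosed K] [Fintype m] [DecidableEq m] [Fintype n] [DecidableEq n]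
    {A : Matrix m m K} {B : Matrix n n K} {X : Matrix m n K} (h : A * X = X * B)
    (hAB : Disjoint (spectrum K A) (spectrum K B)) : X = 0 := by
  have hpow : ∀ k : ℕ, A ^ k * X = X * B ^ k := by
    intro k
    induction k with
    | zero => simp
    | succ k ih =>
      rw [pow_succ', pow_succ', Matrix.mul_assoc, ih, ← Matrix.mul_assoc, h, Matrix.mul_assoc]
  have haeval : ∀ p : K[X], aeval A p * X = X * aeval B p := by
    intro p
    induction p using Polynomial.induction_on' with
    | add p q hp hq => simp only [map_add, Matrix.add_mul, Matrix.mul_add, hp, hq]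
    | monomial k c => simp only [aeval_monomial, Algebra.algebraMap_eq_smul_one,
        Matrix.smul_mul, Matrix.mul_smul, Matrix.one_mul, hpow]
  -- `aeval A` of the characteristic polynomial of `B` is a product of the `A - λ` with `λ` in
  -- the spectrum of `B`, all of which are invertible.
  have hunit : IsUnit (aeval A B.charpoly) := by
    by_contra hnu
    rw [(IsAlgClosed.splits _).eq_prod_roots_of_monic B.charpoly_monic] at hnu
    obtain ⟨k, hkA, hkB⟩ := spectrum.exists_mem_of_not_isUnit_aeval_prod hnu
    exact hAB.ne_of_mem hkA (mem_spectrum_iff_isRoot_charpoly.2 hkB) rfl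
  calc X = (aeval A B.charpoly)⁻¹ * (aeval A B.charpoly * X) :=
        (Matrix.nonsing_inv_mul_cancel_left _ _ ((Matrix.isUnit_iff_isUnit_det _).1 hunit)).symm
    _ = 0 := by rw [haeval, aeval_self_charpoly, Matrix.mul_zero, Matrix.mul_zero]

theorem Matrix.spectrum_transpose {K n : Type*} [Field K] [Fintype n] [DecidableEq n]
    (A : Matrix n n K) : spectrum K Aᵀ = spectrum K A := by
  ext k
  simp only [mem_spectrum_iff_isRoot_charpoly, charpoly_transpose]

variable {n : Type*} [Fintype n] [DecidableEq n]

def lyapunov (M : Matrix n n ℝ) : Matrix n n ℝ →ₗ[ℝ] Matrix n n ℝ :=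
  LinearMap.mulLeft ℝ Mᵀ + LinearMap.mulRight ℝ M

theorem lyapunov_apply (M X : Matrix n n ℝ) : lyapunov M X = Mᵀ * X + X * M := rfl

theorem lyapunov_bijective {M : Matrix n n ℝ} (hM : IsHurwitz M) :
    Function.Bijective (lyapunov M) := by
  have hinj : Function.Injective (lyapunov M) := by
    rw [← LinearMap.ker_eq_bot, LinearMap.ker_eq_bot']
    intro X hX
    set Mc := M.map (algebraMap ℝ ℂ)
    have hdisj : Disjoint (spectrum ℂ Mcᵀ) (spectrum ℂ (-Mc)) := by
      rw [Matrix.spectrum_transpose, ← spectrum.neg_eq, Set.disjoint_left]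
      intro μ hμ hμ'
      have h₁ := hM μ hμ
      have h₂ := hM (-μ) (Set.mem_neg.1 hμ')
      rw [Complex.neg_re] at h₂
      linarith
    have hXc : Mcᵀ * X.map (algebraMap ℝ ℂ) = X.map (algebraMap ℝ ℂ) * -Mc := by
      rw [Matrix.mul_neg, ← sub_eq_zero, sub_neg_eq_add]
      have := congr_arg (Matrix.map · (algebraMap ℝ ℂ)) hX
      rwa [lyapunov_apply, Matrix.map_add _ (map_add _), Matrix.map_mul, Matrix.map_mul,
        Matrix.transpose_map, Matrix.map_zero _ (map_zero _)] at this
    have hXc0 := Matrix.eq_zero_of_mul_eq_mul_of_disjoint_spectrum hXc hdisj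
    ext i j
    simpa using congr_fun₂ hXc0 i j
  exact ⟨hinj, (lyapunov M).injective_iff_surjective.1 hinj⟩

theorem exists_isSymm_lyapunov_eq {M W : Matrix n n ℝ} (hM : IsHurwitz M) (hW : W.IsSymm) :
    ∃ X : Matrix n n ℝ, X.IsSymm ∧ Mᵀ * X + X * M = W := by
  obtain ⟨X, hX⟩ := (lyapunov_bijective hM).2 W
  refine ⟨X, (lyapunov_bijective hM).1 ?_, hX⟩
  simp only [lyapunov_apply] at hX ⊢
  rw [hX, ← hW.eq, ← hX, Matrix.transpose_add, Matrix.transpose_mul, Matrix.transpose_mul,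
    Matrix.transpose_transpose, add_comm]

theorem IsCompact.exists_bound_of_continuousOn_of_isUnit {X E : Type*} [TopologicalSpace X]
    [NormedAddCommGroup E] [NormedSpace ℝ E] [CompleteSpace E] {S : Set X} (hS : IsCompact S)
    {f : X → E →L[ℝ] E} (hf : ContinuousOn f S) (hu : ∀ x ∈ S, IsUnit (f x)) :
    ∃ C, 0 ≤ C ∧ ∀ x ∈ S, ∀ v, ‖v‖ ≤ C * ‖f x v‖ := by
  have hinv : ContinuousOn (fun x => Ring.inverse (f x)) S := fun x hx =>
    ((hu x hx).unit_spec ▸ NormedRing.inverse_continuousAt (hu x hx).unit).comp_continuousWithinAt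
      (hf x hx)
  obtain ⟨C, hC⟩ := hS.exists_bound_of_continuousOn hinv
  refine ⟨max C 0, le_max_right _ _, fun x hx v => ?_⟩
  calc ‖v‖ = ‖Ring.inverse (f x) (f x v)‖ := by
        rw [← (hu x hx).unit_spec, Ring.inverse_unit]
        exact congr_arg norm (DFunLike.congr_fun (Units.inv_mul (hu x hx).unit) v).symm
    _ ≤ ‖Ring.inverse (f x)‖ * ‖f x v‖ := ContinuousLinearMap.le_opNorm _ _
    _ ≤ max C 0 * ‖f x v‖ := by gcongr; exact (hC x hx).trans (le_max_left _ _)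

theorem IsCompact.exists_bound_lyapunov {S : Set (Matrix n n ℝ)} (hS : IsCompact S)
    (hH : ∀ M ∈ S, IsHurwitz M) :
    ∃ C, 0 ≤ C ∧ ∀ M ∈ S, ∀ X : Matrix n n ℝ, ‖X‖ ≤ C * ‖Mᵀ * X + X * M‖ := by
  refine hS.exists_bound_of_continuousOn_of_isUnit
    (f := fun M => LinearMap.toContinuousLinearMap (lyapunov M)) ?_ fun M hM => ?_
  · refine (continuous_clm_apply.2 fun X => ?_).continuousOn
    simp only [LinearMap.coe_toContinuousLinearMap', lyapunov_apply]
    fun_prop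
  · exact ContinuousLinearMap.isUnit_iff_bijective.2 (lyapunov_bijective (hH M hM))

end Lyapunov

section PolicyIteration

variable {n m : Type*} [Fintype n] [Fintype m]
  {A : Matrix n n ℝ} {B : Matrix n m ℝ} {Q : Matrix n n ℝ} {R : Matrix m m ℝ}

variable (A B Q R) in
def IsPolicyValue (K : Matrix m n ℝ) (P : Matrix n n ℝ) : Prop :=
  (A - B * K)ᵀ * P + P * (A - B * K) + Q + Kᵀ * R * K = 0

theorem IsPolicyValue.lyapunov_sub_eq {K K' : Matrix m n ℝ} {P P' : Matrix n n ℝ}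
    (h : IsPolicyValue A B Q R K P) (h' : IsPolicyValue A B Q R K' P') :
    (A - B * K)ᵀ * (P' - P) + (P' - P) * (A - B * K)
      = (B * (K' - K))ᵀ * P' + P' * (B * (K' - K)) - (K' - K)ᵀ * R * K' - Kᵀ * R * (K' - K) := by
  rw [← sub_eq_zero, ← sub_eq_zero.2 (h'.trans h.symm)]
  simp only [Matrix.transpose_sub, Matrix.transpose_mul, Matrix.sub_mul, Matrix.mul_sub,
    Matrix.mul_assoc]
  abel

theorem IsPolicyValue.norm_sub_le_mul_norm_sub {K K' : Matrix m n ℝ} {P P' : Matrix n n ℝ} {C : ℝ}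
    (hC0 : 0 ≤ C) (hC : ∀ X, ‖X‖ ≤ C * ‖(A - B * K)ᵀ * X + X * (A - B * K)‖)
    (h : IsPolicyValue A B Q R K P) (h' : IsPolicyValue A B Q R K' P')
    (hsmall : C * ‖B‖ * ‖K' - K‖ ≤ 1 / 4) :
    ‖P' - P‖ ≤ 2 * C * (2 * ‖B‖ * ‖P‖ + ‖R‖ * (‖K'‖ + ‖K‖)) * ‖K' - K‖ := by
  set E := K' - K
  have hP' : ‖P'‖ ≤ ‖P‖ + ‖P' - P‖ := norm_le_insert' _ _
  have hrhs : ‖(B * E)ᵀ * P' + P' * (B * E) - Eᵀ * R * K' - Kᵀ * R * E‖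
      ≤ ‖E‖ * (2 * ‖B‖ * ‖P‖ + ‖R‖ * (‖K'‖ + ‖K‖)) + 2 * ‖B‖ * ‖E‖ * ‖P' - P‖ :=
    calc _ ≤ ‖(B * E)ᵀ * P'‖ + ‖P' * (B * E)‖ + ‖Eᵀ * R * K'‖ + ‖Kᵀ * R * E‖ :=
          (norm_sub_le _ _).trans
            (by gcongr; exact (norm_sub_le _ _).trans (by gcongr; exact norm_add_le _ _))
      _ ≤ ‖B‖ * ‖E‖ * ‖P'‖ + ‖P'‖ * (‖B‖ * ‖E‖) + ‖E‖ * ‖R‖ * ‖K'‖ + ‖K‖ * ‖R‖ * ‖E‖ := by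
          have hBE := Matrix.frobenius_norm_mul B E
          gcongr
          · exact (Matrix.frobenius_norm_mul _ _).trans
              (by rw [Matrix.frobenius_norm_transpose]; gcongr)
          · exact (Matrix.frobenius_norm_mul _ _).trans (by gcongr)
          · simpa only [Matrix.frobenius_norm_transpose] using
              Matrix.frobenius_norm_mul_mul_le Eᵀ R K'
          · simpa only [Matrix.frobenius_norm_transpose] using
              Matrix.frobenius_norm_mul_mul_le Kᵀ R E
      _ ≤ ‖B‖ * ‖E‖ * (‖P‖ + ‖P' - P‖) + (‖P‖ + ‖P' - P‖) * (‖B‖ * ‖E‖)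
            + ‖E‖ * ‖R‖ * ‖K'‖ + ‖K‖ * ‖R‖ * ‖E‖ := by gcongr
      _ = _ := by ring
  have hD : ‖P' - P‖ ≤ C * ‖E‖ * (2 * ‖B‖ * ‖P‖ + ‖R‖ * (‖K'‖ + ‖K‖))
      + 2 * (C * ‖B‖ * ‖E‖) * ‖P' - P‖ :=
    calc ‖P' - P‖ ≤ C * ‖(A - B * K)ᵀ * (P' - P) + (P' - P) * (A - B * K)‖ := hC _
      _ = C * ‖(B * E)ᵀ * P' + P' * (B * E) - Eᵀ * R * K' - Kᵀ * R * E‖ := by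
          rw [h.lyapunov_sub_eq h']
      _ ≤ _ := by linarith [mul_le_mul_of_nonneg_left hrhs hC0]
  have : 2 * (C * ‖B‖ * ‖E‖) * ‖P' - P‖ ≤ 2 * (1 / 4) * ‖P' - P‖ := by gcongr
  linarith

variable [DecidableEq m]

theorem isPolicyValue_inv_mul_iff (hRs : R.IsSymm) (hR : IsUnit R.det) {P : Matrix n n ℝ}
    (hP : P.IsSymm) (X : Matrix n n ℝ) :
    IsPolicyValue A B Q R (R⁻¹ * Bᵀ * P) X ↔
      (A - B * R⁻¹ * Bᵀ * P)ᵀ * X + X * (A - B * R⁻¹ * Bᵀ * P) = -(Q + P * B * R⁻¹ * Bᵀ * P) := by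
  have hgain : (R⁻¹ * Bᵀ * P)ᵀ * R * (R⁻¹ * Bᵀ * P) = P * B * R⁻¹ * Bᵀ * P := by
    simp only [Matrix.transpose_mul, Matrix.transpose_nonsing_inv, hRs.eq, hP.eq,
      Matrix.transpose_transpose, Matrix.mul_assoc, Matrix.nonsing_inv_mul_cancel_left _ _ hR]
  rw [IsPolicyValue, hgain, add_assoc, add_eq_zero_iff_eq_neg]
  simp only [Matrix.mul_assoc]

theorem norm_sub_le_of_add_mul_eq {G₂ : Matrix m m ℝ} {K K' G₁ : Matrix m n ℝ} {d : ℝ}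
    (hR : IsUnit R.det) (h : (R + G₂) * K' = R * K + G₁) (hG₁ : ‖G₁‖ ≤ d) (hG₂ : ‖G₂‖ ≤ d)
    (hd : ‖R⁻¹‖ * d ≤ 1 / 2) : ‖K' - K‖ ≤ 2 * ‖R⁻¹‖ * (1 + ‖K‖) * d := by
  have hE : K' - K = R⁻¹ * (G₁ - G₂ * K') := by
    rw [← Matrix.nonsing_inv_mul_cancel_left R (K' - K) hR]
    congr 1
    rw [Matrix.mul_sub, sub_eq_sub_iff_add_eq_add, ← Matrix.add_mul, h, add_comm]
  have hd0 : 0 ≤ d := (norm_nonneg _).trans hG₁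
  have hbound : ‖K' - K‖ ≤ ‖R⁻¹‖ * d * (1 + ‖K‖) + ‖R⁻¹‖ * d * ‖K' - K‖ :=
    calc ‖K' - K‖ ≤ ‖R⁻¹‖ * (‖G₁‖ + ‖G₂‖ * ‖K'‖) := by
          rw [hE]
          refine (Matrix.frobenius_norm_mul _ _).trans ?_
          gcongr
          exact (norm_sub_le _ _).trans (by gcongr; exact Matrix.frobenius_norm_mul _ _)
      _ ≤ ‖R⁻¹‖ * (d + d * (‖K‖ + ‖K' - K‖)) := by
          gcongr
          exact norm_le_insert' _ _
      _ = _ := by ring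
  have : ‖R⁻¹‖ * d * ‖K' - K‖ ≤ 1 / 2 * ‖K' - K‖ := by gcongr
  linarith

theorem norm_sub_le_of_disturbed_update {K K' G₁ : Matrix m n ℝ} {G₂ : Matrix m m ℝ}
    {Φ P' : Matrix n n ℝ} {C κ φ d : ℝ} (hR : IsUnit R.det) (hC0 : 0 ≤ C)
    (hC : ∀ X, ‖X‖ ≤ C * ‖(A - B * K)ᵀ * X + X * (A - B * K)‖) (hK : ‖K‖ ≤ κ) (hΦn : ‖Φ‖ ≤ φ)
    (hΦ : IsPolicyValue A B Q R K Φ) (hupdate : (R + G₂) * K' = R * K + G₁)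
    (hP' : IsPolicyValue A B Q R K' P') (hG₁ : ‖G₁‖ ≤ d) (hG₂ : ‖G₂‖ ≤ d)
    (hd : (‖R⁻¹‖ + 2 * ‖R⁻¹‖ * (1 + κ) * (1 + 4 * C * ‖B‖)) * d ≤ 1 / 2) :
    ‖P' - Φ‖ ≤ 2 * C * (2 * ‖B‖ * φ + ‖R‖ * (2 * κ + 1)) * (2 * ‖R⁻¹‖ * (1 + κ)) * d := by
  have hd0 : 0 ≤ d := (norm_nonneg _).trans hG₁
  have hκ : 0 ≤ κ := (norm_nonneg _).trans hK
  have hcE : 0 ≤ 2 * ‖R⁻¹‖ * (1 + κ) := by positivity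
  have hE : ‖K' - K‖ ≤ 2 * ‖R⁻¹‖ * (1 + κ) * d := by
    refine (norm_sub_le_of_add_mul_eq hR hupdate hG₁ hG₂ ?_).trans (by gcongr)
    nlinarith [mul_nonneg (mul_nonneg hcE (by positivity : 0 ≤ 1 + 4 * C * ‖B‖)) hd0]
  have hEd : 2 * ‖R⁻¹‖ * (1 + κ) * d ≤ 1 := by
    nlinarith [mul_nonneg (mul_nonneg hC0 (norm_nonneg B)) (mul_nonneg hcE hd0)]
  have hK' : ‖K'‖ ≤ κ + 1 := (norm_le_insert' K' K).trans (by linarith)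
  refine (hΦ.norm_sub_le_mul_norm_sub hC0 hC hP' ?_).trans ?_
  · calc C * ‖B‖ * ‖K' - K‖ ≤ C * ‖B‖ * (2 * ‖R⁻¹‖ * (1 + κ) * d) := by gcongr
      _ ≤ 1 / 4 := by nlinarith [norm_nonneg R⁻¹]
  · have hφ : 0 ≤ φ := (norm_nonneg _).trans hΦn
    calc _ ≤ 2 * C * (2 * ‖B‖ * φ + ‖R‖ * ((κ + 1) + κ)) * (2 * ‖R⁻¹‖ * (1 + κ) * d) := by gcongr
      _ = _ := by ring

variable [DecidableEq n]

variable (A B Q R) in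
def ExactStepContracts (Pstar : Matrix n n ℝ) (σ δ₀ : ℝ) : Prop :=
  ∀ P : Matrix n n ℝ, P.IsSymm → ‖P - Pstar‖ < δ₀ →
    IsHurwitz (A - B * R⁻¹ * Bᵀ * P) ∧
    ∀ P' : Matrix n n ℝ, P'.IsSymm →
      (A - B * R⁻¹ * Bᵀ * P)ᵀ * P' + P' * (A - B * R⁻¹ * Bᵀ * P) = -(Q + P * B * R⁻¹ * Bᵀ * P) →
      ‖P' - Pstar‖ ≤ σ * ‖P - Pstar‖

theorem ExactStepContracts.exists_bound_lyapunov {Pstar : Matrix n n ℝ} {σ δ₀ r : ℝ}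
    (hcontract : ExactStepContracts A B Q R Pstar σ δ₀) (hr : r < δ₀) :
    ∃ C, 0 ≤ C ∧ ∀ P : Matrix n n ℝ, P.IsSymm → ‖P - Pstar‖ ≤ r → ∀ X : Matrix n n ℝ,
      ‖X‖ ≤ C * ‖(A - B * (R⁻¹ * Bᵀ * P))ᵀ * X + X * (A - B * (R⁻¹ * Bᵀ * P))‖ := by
  have hball : IsCompact ({P : Matrix n n ℝ | P.IsSymm} ∩ Metric.closedBall Pstar r) :=
    (isCompact_closedBall _ _).inter_left (isClosed_eq continuous_id.matrix_transpose continuous_id)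
  obtain ⟨C, hC0, hC⟩ := (hball.image (f := fun P => A - B * (R⁻¹ * Bᵀ * P))
    (by fun_prop)).exists_bound_lyapunov <| by
      rintro _ ⟨P, ⟨hP, hPr⟩, rfl⟩
      simpa only [Matrix.mul_assoc] using
        (hcontract P hP ((mem_closedBall_iff_norm.1 hPr).trans_lt hr)).1
  exact ⟨C, hC0, fun P hP hPr => hC _ ⟨P, ⟨hP, mem_closedBall_iff_norm.2 hPr⟩, rfl⟩⟩

theorem ExactStepContracts.exists_isPolicyValue {Pstar : Matrix n n ℝ} {σ δ₀ : ℝ}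
    (hcontract : ExactStepContracts A B Q R Pstar σ δ₀) (hQ : Q.IsSymm) (hRs : R.IsSymm)
    (hR : IsUnit R.det) {P : Matrix n n ℝ} (hP : P.IsSymm) (hPδ : ‖P - Pstar‖ < δ₀) :
    ∃ Φ, IsPolicyValue A B Q R (R⁻¹ * Bᵀ * P) Φ ∧ ‖Φ - Pstar‖ ≤ σ * ‖P - Pstar‖ := by
  obtain ⟨hH, hcontr⟩ := hcontract P hP hPδ
  have hW : (-(Q + P * B * R⁻¹ * Bᵀ * P)).IsSymm := by
    refine (hQ.add ?_).neg
    simp only [IsSymm, Matrix.transpose_mul, Matrix.transpose_nonsing_inv, hRs.eq, hP.eq,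
      Matrix.transpose_transpose, Matrix.mul_assoc]
  obtain ⟨Φ, hΦs, hΦ⟩ := exists_isSymm_lyapunov_eq hH hW
  exact ⟨Φ, (isPolicyValue_inv_mul_iff hRs hR hP Φ).2 hΦ, hcontr Φ hΦs hΦ⟩

theorem ExactStepContracts.exists_norm_sub_le_mul_add {Pstar : Matrix n n ℝ} {σ δ₀ r : ℝ}
    (hcontract : ExactStepContracts A B Q R Pstar σ δ₀) (hQ : Q.IsSymm) (hRs : R.IsSymm)
    (hR : IsUnit R.det) (hσ : 0 ≤ σ) (hr0 : 0 ≤ r) (hr : r < δ₀) :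
    ∃ c, 0 ≤ c ∧ ∃ δ > 0, ∀ (P P' : Matrix n n ℝ) (K' G₁ : Matrix m n ℝ) (G₂ : Matrix m m ℝ)
      (d : ℝ), P.IsSymm → ‖P - Pstar‖ ≤ r → (R + G₂) * K' = Bᵀ * P + G₁ →
      IsPolicyValue A B Q R K' P' → ‖G₁‖ ≤ d → ‖G₂‖ ≤ d → d ≤ δ →
      ‖P' - Pstar‖ ≤ σ * ‖P - Pstar‖ + c * d := by
  obtain ⟨C, hC0, hC⟩ := hcontract.exists_bound_lyapunov hr
  -- `κ` bounds the exact gains `R⁻¹ Bᵀ P` and `‖P*‖ + σ r` the exact values on the ball.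
  set κ := ‖R⁻¹‖ * ‖B‖ * (‖Pstar‖ + r)
  set s := ‖R⁻¹‖ + 2 * ‖R⁻¹‖ * (1 + κ) * (1 + 4 * C * ‖B‖)
  refine ⟨2 * C * (2 * ‖B‖ * (‖Pstar‖ + σ * r) + ‖R‖ * (2 * κ + 1)) * (2 * ‖R⁻¹‖ * (1 + κ)),
    by positivity, 1 / (2 * s + 1), by positivity, ?_⟩
  intro P P' K' G₁ G₂ d hP hPr hupdate hP' hG₁ hG₂ hdδ
  obtain ⟨Φ, hΦ, hΦP⟩ := hcontract.exists_isPolicyValue hQ hRs hR hP (hPr.trans_lt hr)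
  have hK : ‖R⁻¹ * Bᵀ * P‖ ≤ κ := by
    refine (Matrix.frobenius_norm_mul_mul_le _ _ _).trans ?_
    rw [Matrix.frobenius_norm_transpose]
    show _ ≤ ‖R⁻¹‖ * ‖B‖ * (‖Pstar‖ + r)
    gcongr
    exact (norm_le_insert' P Pstar).trans (by linarith)
  have hΦn : ‖Φ‖ ≤ ‖Pstar‖ + σ * r :=
    (norm_le_insert' Φ Pstar).trans (by gcongr; exact hΦP.trans (by gcongr))
  have hd : s * d ≤ 1 / 2 :=
    calc s * d ≤ s * (1 / (2 * s + 1)) := by gcongr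
      _ ≤ 1 / 2 := by rw [mul_one_div, div_le_div_iff₀ (by positivity) two_pos]; linarith
  have hupdate' : (R + G₂) * K' = R * (R⁻¹ * Bᵀ * P) + G₁ := by
    rwa [Matrix.mul_assoc R⁻¹, Matrix.mul_nonsing_inv_cancel_left _ _ hR]
  have hstep := norm_sub_le_of_disturbed_update hR hC0 (hC P hP hPr) hK hΦn hΦ hupdate' hP' hG₁
    hG₂ hd
  linarith [norm_sub_le_norm_sub_add_norm_sub P' Φ Pstar]

end PolicyIteration

theorem tendsto_zero_of_le_mul_add {σ : ℝ} (hσ0 : 0 ≤ σ) (hσ1 : σ < 1) {e u : ℕ → ℝ}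
    (he : ∀ i, 0 ≤ e i) (hrec : ∀ᶠ i in atTop, e (i + 1) ≤ σ * e i + u i)
    (hu : Tendsto u atTop (𝓝 0)) : Tendsto e atTop (𝓝 0) := by
  refine tendsto_order.2 ⟨fun a ha => Eventually.of_forall fun i => ha.trans_le (he i),
    fun ε hε => ?_⟩
  have hu' : ∀ᶠ i in atTop, u i ≤ (1 - σ) * (ε / 2) :=
    hu.eventually (eventually_le_nhds (by nlinarith))
  obtain ⟨N, hN⟩ := eventually_atTop.1 (hrec.and hu')
  -- Once `u ≤ (1 - σ) ε / 2`, the excess of `e` over `ε / 2` decays geometrically.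
  have hgeom : ∀ k, e (N + k) - ε / 2 ≤ σ ^ k * (e N - ε / 2) := by
    intro k
    induction k with
    | zero => simp
    | succ k ih =>
      obtain ⟨hstep, hsmall⟩ := hN (N + k) (Nat.le_add_right N k)
      calc e (N + k + 1) - ε / 2 ≤ σ * (e (N + k) - ε / 2) := by nlinarith
        _ ≤ σ * (σ ^ k * (e N - ε / 2)) := by gcongr
        _ = σ ^ (k + 1) * (e N - ε / 2) := by ring
  have hpow : Tendsto (fun k => σ ^ k * (e N - ε / 2)) atTop (𝓝 0) := by
    simpa using (tendsto_pow_atTop_nhds_zero_of_lt_one hσ0 hσ1).mul_const (e N - ε / 2)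
  obtain ⟨k₀, hk₀⟩ := eventually_atTop.1 (hpow.eventually (gt_mem_nhds (half_pos hε)))
  refine eventually_atTop.2 ⟨N + k₀, fun i hi => ?_⟩
  obtain ⟨k, rfl⟩ := Nat.exists_eq_add_of_le (le_of_add_le_left hi)
  linarith [hgeom k, hk₀ k (by omega)]

theorem tendsto_zero_of_le_mul_add_of_le {σ r : ℝ} (hσ0 : 0 ≤ σ) (hσ1 : σ < 1) {e u : ℕ → ℝ}
    (he : ∀ i, 0 ≤ e i) (he₁ : e 1 ≤ r) (hrec : ∀ i, 1 ≤ i → e i ≤ r → e (i + 1) ≤ σ * e i + u i)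
    (hu_le : ∀ i, 1 ≤ i → u i ≤ (1 - σ) * r) (hu : Tendsto u atTop (𝓝 0)) :
    Tendsto e atTop (𝓝 0) := by
  have hle : ∀ i, 1 ≤ i → e i ≤ r := by
    intro i hi
    induction i, hi using Nat.le_induction with
    | base => exact he₁
    | succ i hi ih => nlinarith [hrec i hi ih, hu_le i hi]
  exact tendsto_zero_of_le_mul_add hσ0 hσ1 he
    (eventually_atTop.2 ⟨1, fun i hi => hrec i hi (hle i hi)⟩) hu

theorem robust_policy_iteration_converging_disturbance_general
    (n m : ℕ)
    (A : Matrix (Fin n) (Fin n) ℝ) (B : Matrix (Fin n) (Fin m) ℝ)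
    (Q : Matrix (Fin n) (Fin n) ℝ) (R : Matrix (Fin m) (Fin m) ℝ)
    (hQ : Q.PosSemidef) (hR : R.PosDef)
    (Pstar : Matrix (Fin n) (Fin n) ℝ)
    (σ : ℝ) (hσ0 : 0 < σ) (hσ1 : σ < 1) (δ₀ : ℝ) (hδ₀ : 0 < δ₀)
    (hcontract : ∀ P : Matrix (Fin n) (Fin n) ℝ, P.IsSymm → frobNorm (P - Pstar) < δ₀ →
      IsHurwitz (A - B * R⁻¹ * Bᵀ * P) ∧
      ∀ P' : Matrix (Fin n) (Fin n) ℝ, P'.IsSymm →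
        (A - B * R⁻¹ * Bᵀ * P)ᵀ * P' + P' * (A - B * R⁻¹ * Bᵀ * P)
            = -(Q + P * B * R⁻¹ * Bᵀ * P) →
        frobNorm (P' - Pstar) ≤ σ * frobNorm (P - Pstar)) :
    ∃ δ₁ > 0,
      ∀ ΔG : ℕ → Matrix (Fin n ⊕ Fin m) (Fin n ⊕ Fin m) ℝ,
      ∀ Pt : ℕ → Matrix (Fin n) (Fin n) ℝ, ∀ Kh : ℕ → Matrix (Fin m) (Fin n) ℝ,
        IsRPIData n m A B Q R ΔG Pt Kh →
        (Pt 0).IsSymm → frobNorm (Pt 0 - Pstar) < δ₀ → Kh 1 = R⁻¹ * Bᵀ * Pt 0 →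
        BddAbove (Set.range fun j => frobNorm (ΔG (j + 1))) →
        (⨆ j : ℕ, frobNorm (ΔG (j + 1))) < δ₁ →
        Tendsto (fun i => frobNorm (ΔG i)) atTop (nhds 0) →
        Tendsto (fun i => frobNorm (Pt i - Pstar)) atTop (nhds 0) := by
  simp only [frobNorm_eq_norm] at hcontract ⊢
  have hRs : R.IsSymm := isHermitian_iff_isSymm.1 hR.isHermitian
  have hRu : IsUnit R.det := (isUnit_iff_isUnit_det R).1 hR.isUnit
  obtain ⟨r, hσr, hrδ⟩ := exists_between (mul_lt_of_lt_one_left hδ₀ hσ1)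
  have hr0 : 0 < r := (mul_pos hσ0 hδ₀).trans hσr
  obtain ⟨c, hc, δ, hδ, hstep⟩ := ExactStepContracts.exists_norm_sub_le_mul_add hcontract
    (isHermitian_iff_isSymm.1 hQ.isHermitian) hRs hRu hσ0.le hr0.le hrδ
  refine ⟨min δ ((1 - σ) * r / (c + 1)),
    lt_min hδ (div_pos (mul_pos (sub_pos.2 hσ1) hr0) (by linarith)), ?_⟩
  intro ΔG Pt Kh hdata hsym₀ hPt₀ hKh₁ hbdd hsup hlim
  have hsmall : ∀ i, 1 ≤ i → ‖ΔG i‖ ≤ min δ ((1 - σ) * r / (c + 1)) := by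
    intro i hi
    obtain ⟨j, rfl⟩ := Nat.exists_eq_add_of_le' hi
    exact (le_ciSup hbdd j).trans hsup.le
  refine tendsto_zero_of_le_mul_add_of_le (r := r) hσ0.le hσ1 (fun _ => norm_nonneg _) ?_
    (fun i hi hPr => ?_) (fun i hi => ?_) (by simpa using hlim.const_mul c)
  · obtain ⟨-, hPs, hval, -⟩ := hdata 1 le_rfl
    rw [hKh₁] at hval
    have h₁ := (hcontract _ hsym₀ hPt₀).2 _ hPs ((isPolicyValue_inv_mul_iff hRs hRu hsym₀ _).1 hval)
    nlinarith
  · obtain ⟨-, hPs, -, hupdate⟩ := hdata i hi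
    exact hstep _ _ _ _ _ _ hPs hPr hupdate (hdata (i + 1) (by omega)).2.2.1
      ((ΔG i).frobenius_norm_submatrix_le Sum.inr_injective Sum.inl_injective)
      ((ΔG i).frobenius_norm_submatrix_le Sum.inr_injective Sum.inr_injective)
      ((hsmall i hi).trans (min_le_left _ _))
  · have h := (hsmall i hi).trans (min_le_right _ _)
    rw [le_div_iff₀ (by linarith)] at h
    nlinarith [norm_nonneg (ΔG i)]

/-- if the disturbances are small and converge to zero, the robust policy
iteration converges to the optimal solution `P*`. -/
theorem robust_policy_iteration_converging_disturbance
    (n m : ℕ) (hn : 0 < n) (hm : 0 < m)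
    (A : Matrix (Fin n) (Fin n) ℝ) (B : Matrix (Fin n) (Fin m) ℝ)
    (Q : Matrix (Fin n) (Fin n) ℝ) (R : Matrix (Fin m) (Fin m) ℝ)
    (hQ : Q.PosSemidef) (hR : R.PosDef)
    (Pstar : Matrix (Fin n) (Fin n) ℝ) (hPstar : Pstar.PosDef)
    (hARE : Aᵀ * Pstar + Pstar * A - Pstar * B * R⁻¹ * Bᵀ * Pstar + Q = 0)
    (hAstar : IsHurwitz (A - B * R⁻¹ * Bᵀ * Pstar))
    (σ : ℝ) (hσ0 : 0 < σ) (hσ1 : σ < 1) (δ₀ : ℝ) (hδ₀ : 0 < δ₀)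
    (hcontract : ∀ P : Matrix (Fin n) (Fin n) ℝ, P.IsSymm → frobNorm (P - Pstar) < δ₀ →
      IsHurwitz (A - B * R⁻¹ * Bᵀ * P) ∧
      ∀ P' : Matrix (Fin n) (Fin n) ℝ, P'.IsSymm →
        (A - B * R⁻¹ * Bᵀ * P)ᵀ * P' + P' * (A - B * R⁻¹ * Bᵀ * P)
            = -(Q + P * B * R⁻¹ * Bᵀ * P) →
        frobNorm (P' - Pstar) ≤ σ * frobNorm (P - Pstar)) :
    ∃ δ₁ > 0,
      ∀ ΔG : ℕ → Matrix (Fin n ⊕ Fin m) (Fin n ⊕ Fin m) ℝ,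
      ∀ Pt : ℕ → Matrix (Fin n) (Fin n) ℝ, ∀ Kh : ℕ → Matrix (Fin m) (Fin n) ℝ,
        IsRPIData n m A B Q R ΔG Pt Kh →
        (Pt 0).IsSymm → frobNorm (Pt 0 - Pstar) < δ₀ → Kh 1 = R⁻¹ * Bᵀ * Pt 0 →
        BddAbove (Set.range fun j => frobNorm (ΔG (j + 1))) →
        (⨆ j : ℕ, frobNorm (ΔG (j + 1))) < δ₁ →
        Tendsto (fun i => frobNorm (ΔG i)) atTop (nhds 0) →
        Tendsto (fun i => frobNorm (Pt i - Pstar)) atTop (nhds 0) :=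
  robust_policy_iteration_converging_disturbance_general n m A B Q R hQ hR Pstar σ hσ0 hσ1 δ₀ hδ₀
    hcontract
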